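/- For every n ≥ 2, ∫₀¹ [C^{(2)}_{n−2}(x)]² dx = n⁴/16 + ((4n² − 1)/64)·(ψ(n + 1/2) + γ + log 4) − (5/32)·n². -/

import Mathlib

open Polynomial Real

/-- The digamma function `ψ(x) = d/dx log Γ(x)`. -/
noncomputable def digamma (x : ℝ) : ℝ := deriv (fun y => Real.log (Real.Gamma y)) x

/-- The Gegenbauer polynomial of index 2, defined by `2 C²ₙ(x) = d/dx U_{n+1}(x)`. -/
noncomputable def gegenbauer2 (n : ℕ) : Polynomial ℝ :=
  Polynomial.C (1 / 2 : ℝ) * Polynomial.derivative (Polynomial.Chebyshev.U ℝ (n + 1))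

/-! With `U'ₖ` the derivative of the Chebyshev polynomial `Uₖ` we have `C²_{n-2} = U'_{n-1} / 2`.
Differentiating `U_{n+1} - U_{n-1} = 2 T_{n+1}` and `U_{n+1} + U_{n-1} = 2 X Uₙ` gives
`U'_{n+1}² - U'_{n-1}² = 2 (n + 1) (Uₙ² + (X Uₙ²)')`, so `∫₀¹ U'_{n-1}²` obeys a two-step recursion
driven by `∫₀¹ Uₙ² = ∑_{k ≤ n} 1 / (2k + 1)`; the latter follows from
`U_{k+1}² - U_k² = U_{2k+2} = T'_{2k+3} / (2k + 3)`. On the other side, `ψ(x + 1) = ψ(x) + 1 / x` and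
`ψ(1/2) = -γ - 2 log 2` turn `ψ(n + 1/2) + γ + log 4` into twice the same odd harmonic sum. -/

open Polynomial.Chebyshev intervalIntegral

noncomputable def oddHarmonic (n : ℕ) : ℝ := ∑ k ∈ Finset.range n, 1 / (2 * k + 1)

lemma oddHarmonic_succ (n : ℕ) : oddHarmonic (n + 1) = oddHarmonic n + 1 / (2 * n + 1) :=
  Finset.sum_range_succ _ n

lemma digamma_add_one {x : ℝ} (hx : 0 < x) : digamma (x + 1) = digamma x + 1 / x := by
  have hlogGamma : DifferentiableAt ℝ (fun t => log (Gamma t)) x :=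
    (differentiableAt_Gamma fun m => by linarith [m.cast_nonneg (α := ℝ)]).log
      (Gamma_pos_of_pos hx).ne'
  unfold digamma
  rw [← deriv_comp_add_const, one_div, ← deriv_log,
    ← deriv_add hlogGamma (differentiableAt_log hx.ne')]
  refine Filter.EventuallyEq.deriv_eq ?_
  filter_upwards [eventually_gt_nhds hx] with y hy
  rw [Pi.add_apply, Gamma_add_one hy.ne', log_mul hy.ne' (Gamma_pos_of_pos hy).ne', add_comm]

lemma digamma_one_half : digamma (1 / 2) = -eulerMascheroniConstant - 2 * log 2 := by
  unfold digamma
  rw [(hasDerivAt_Gamma_one_half.log (Gamma_pos_of_pos one_half_pos).ne').deriv,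
    Gamma_one_half_eq]
  field_simp [(sqrt_pos.mpr pi_pos).ne']
  ring

lemma digamma_nat_add_one_half (n : ℕ) :
    digamma (n + 1 / 2) + eulerMascheroniConstant + log 4 = 2 * oddHarmonic n := by
  induction n with
  | zero =>
    rw [Nat.cast_zero, zero_add, digamma_one_half, show (4 : ℝ) = 2 ^ 2 by norm_num, log_pow]
    simp only [oddHarmonic, Finset.range_zero, Finset.sum_empty]
    ring
  | succ n ih =>
    have hpos : (0 : ℝ) < n + 1 / 2 := by positivity
    rw [Nat.cast_succ, add_right_comm _ 1, digamma_add_one hpos, oddHarmonic_succ]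
    have hinv : 1 / ((n : ℝ) + 1 / 2) = 2 * (1 / (2 * n + 1)) := by field_simp
    linear_combination ih + hinv

section Chebyshev

variable {R : Type*} [CommRing R]

lemma U_mul_U_sub_U_mul_U (n : ℕ) (k : ℤ) :
    U R (n + 1) * U R (n + 1 + k) - U R n * U R (n + k) = U R (2 * n + 2 + k) := by
  induction n generalizing k with
  | zero =>
    simp only [Nat.cast_zero, zero_add, U_one, U_zero]
    linear_combination (norm := ring_nf) -U_add_two R k
  | succ n ih =>
    push_cast
    linear_combination (norm := ring_nf)
      U R (n + 2 + k) * U_add_two R n - U R n * U_add_two R (n + k) + 2 * X * ih (k + 1) - ih k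
        - U_add_two R (2 * n + 2 + k)

lemma U_add_one_sq_sub_U_sq (n : ℕ) : U R (n + 1) ^ 2 - U R n ^ 2 = U R (2 * (n + 1)) := by
  linear_combination (norm := ring_nf) U_mul_U_sub_U_mul_U (R := R) n 0

lemma derivative_U_add_one_sq (n : ℤ) :
    derivative (U R (n + 1)) ^ 2 = derivative (U R (n - 1)) ^ 2
      + 2 * (n + 1 : R[X]) * (U R n ^ 2 + derivative (X * U R n ^ 2)) := by
  have hT : derivative (T R (n + 1)) = (n + 1 : R[X]) * U R n := by
    rw [T_derivative_eq_U, add_sub_cancel_right]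
    push_cast
    ring
  have hdiff : derivative (U R (n + 1)) - derivative (U R (n - 1))
      = 2 * (n + 1 : R[X]) * U R n := by
    have h := congrArg derivative (two_mul_T_eq_U_sub_U R (n - 1))
    rw [show n - 1 + 2 = n + 1 by ring, derivative_sub, derivative_mul, hT] at h
    simp only [derivative_ofNat, zero_mul, zero_add] at h
    linear_combination -h
  have hsum : derivative (U R (n + 1)) + derivative (U R (n - 1))
      = 2 * U R n + 2 * X * derivative (U R n) := by
    have h := congrArg derivative (U_add_one R n)
    simp only [derivative_sub, derivative_mul, derivative_X, derivative_ofNat] at h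
    linear_combination h
  rw [derivative_mul, derivative_X, derivative_sq, map_ofNat]
  linear_combination (derivative (U R (n + 1)) + derivative (U R (n - 1))) * hdiff
    + 2 * (n + 1 : R[X]) * U R n * hsum

end Chebyshev

lemma integral_eval_derivative (p : ℝ[X]) (a b : ℝ) :
    ∫ x in a..b, (derivative p).eval x = p.eval b - p.eval a :=
  integral_deriv_eq_sub' _ (funext fun _ => p.deriv) (fun _ _ => p.differentiableAt)
    (derivative p).continuous.continuousOn

lemma integral_eval_U_two_mul (m : ℤ) :
    ∫ x in (0 : ℝ)..1, (U ℝ (2 * m)).eval x = 1 / (2 * m + 1) := by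
  have hne : (2 * m + 1 : ℝ) ≠ 0 := by exact_mod_cast (by omega : 2 * m + 1 ≠ 0)
  have hU (x : ℝ) : (U ℝ (2 * m)).eval x = (derivative (T ℝ (2 * m + 1))).eval x / (2 * m + 1) := by
    rw [T_derivative_eq_U, add_sub_cancel_right, eval_mul, eval_intCast]
    push_cast
    field_simp
  simp_rw [hU]
  rw [integral_div, integral_eval_derivative, T_eval_one,
    T_eval_zero_of_odd ℝ (odd_two_mul_add_one m), sub_zero]

lemma integral_eval_U_sq (n : ℕ) :
    ∫ x in (0 : ℝ)..1, (U ℝ n).eval x ^ 2 = oddHarmonic (n + 1) := by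
  induction n with
  | zero => simp [oddHarmonic]
  | succ n ih =>
    have hU (x : ℝ) :
        (U ℝ (n + 1 : ℕ)).eval x ^ 2 = (U ℝ n).eval x ^ 2 + (U ℝ (2 * (n + 1))).eval x := by
      simpa [sub_eq_iff_eq_add'] using congrArg (eval x) (U_add_one_sq_sub_U_sq (R := ℝ) n)
    simp_rw [hU]
    rw [integral_add, ih, integral_eval_U_two_mul, oddHarmonic_succ (n + 1)]
    · push_cast
      ring
    all_goals exact Continuous.intervalIntegrable (by fun_prop) _ _

lemma integral_eval_derivative_U_add_one_sq (n : ℕ) :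
    ∫ x in (0 : ℝ)..1, (derivative (U ℝ (n + 1))).eval x ^ 2
      = (∫ x in (0 : ℝ)..1, (derivative (U ℝ (n - 1))).eval x ^ 2)
        + 2 * (n + 1) * (oddHarmonic (n + 1) + (n + 1) ^ 2) := by
  have hU (x : ℝ) : (derivative (U ℝ (n + 1))).eval x ^ 2
      = (derivative (U ℝ (n - 1))).eval x ^ 2
        + 2 * (n + 1) * ((U ℝ n).eval x ^ 2 + (derivative (X * U ℝ n ^ 2)).eval x) := by
    simpa using congrArg (eval x) (derivative_U_add_one_sq (R := ℝ) n)
  simp_rw [hU]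
  rw [integral_add, integral_const_mul, integral_add, integral_eval_U_sq,
    integral_eval_derivative]
  · simp
  all_goals exact Continuous.intervalIntegrable (by fun_prop) _ _

lemma integral_eval_derivative_U_sub_one_sq (n : ℕ) :
    ∫ x in (0 : ℝ)..1, (derivative (U ℝ (n - 1))).eval x ^ 2
      = n ^ 4 / 4 + (4 * n ^ 2 - 1) / 8 * oddHarmonic n - 5 / 8 * n ^ 2 := by
  induction n using Nat.twoStepInduction with
  | zero => simp [oddHarmonic]
  | one => norm_num [oddHarmonic]
  | more n ih _ =>
    push_cast
    rw [show (n : ℤ) + 2 - 1 = n + 1 by ring, integral_eval_derivative_U_add_one_sq, ih,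
      oddHarmonic_succ (n + 1), oddHarmonic_succ]
    push_cast
    field_simp
    ring

lemma integral_eval_gegenbauer2_sq (m : ℕ) :
    ∫ x in (0 : ℝ)..1, (gegenbauer2 m).eval x ^ 2
      = (∫ x in (0 : ℝ)..1, (derivative (U ℝ (m + 1))).eval x ^ 2) / 4 := by
  simp only [gegenbauer2, eval_mul, eval_C, mul_pow, integral_const_mul]
  ring

theorem integral_gegenbauer2_sq (n : ℕ) (hn : 2 ≤ n) :
    (∫ x in (0 : ℝ)..1, ((gegenbauer2 (n - 2)).eval x) ^ 2)
      = (n : ℝ) ^ 4 / 16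
        + ((4 * (n : ℝ) ^ 2 - 1) / 64)
            * (digamma ((n : ℝ) + 1 / 2) + Real.eulerMascheroniConstant + Real.log 4)
        - (5 / 32) * (n : ℝ) ^ 2 := by
  obtain ⟨m, rfl⟩ := Nat.exists_eq_add_of_le' hn
  rw [Nat.add_sub_cancel, integral_eval_gegenbauer2_sq, digamma_nat_add_one_half,
    show (m : ℤ) + 1 = (m + 2 : ℕ) - 1 by push_cast; ring, integral_eval_derivative_U_sub_one_sq]
  ring
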